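/- For every integer ℓ ≥ 1, the three graphs 𝒮_{8ℓ+7}, ℛ_{2ℓ+7} ∪ 3ℓ·K₂ (the disjoint union of ℛ_{2ℓ+7} with 3ℓ copies of K₂), and 𝒬_{2ℓ+7} ∪ 3ℓ·K₂ are pairwise cospectral (their adjacency matrices have equal characteristic polynomials), and neither of the latter two graphs is isomorphic to 𝒮_{8ℓ+7}. -/

import Mathlib

open Polynomial
open scoped Classical

/-- The adjacency matrix (over `ℝ`) of a finite simple graph. -/
noncomputable def adjMat {V : Type*} [Fintype V] (G : SimpleGraph V) : Matrix V V ℝ :=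
  Matrix.of fun i j => if G.Adj i j then 1 else 0

/-- The bipartite graph with "bipartite adjacency relation" `P`: vertex set `α ⊕ β`, with
`Sum.inl i` adjacent to `Sum.inr j` iff `P i j`. -/
def bipGraph {α β : Type*} (P : α → β → Prop) : SimpleGraph (α ⊕ β) :=
  SimpleGraph.fromRel fun x y => ∃ i j, x = Sum.inl i ∧ y = Sum.inr j ∧ P i j

/-- `𝒮_{2k+1}`, the subdivision of the star `K_{1,k}`. -/
def starSubdiv (k : ℕ) : SimpleGraph (Unit ⊕ (Fin k ⊕ Fin k)) :=
  SimpleGraph.fromRel fun x y =>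
    (∃ i : Fin k, x = Sum.inl () ∧ y = Sum.inr (Sum.inl i)) ∨
    (∃ i : Fin k, x = Sum.inr (Sum.inl i) ∧ y = Sum.inr (Sum.inr i))

/-- `ℛ_{2k+1}` (for `k ≥ 3`): bipartite adjacency matrix `[[I_{k−3}, J], [O, Ĩ₃]]`. -/
def Rgraph (k : ℕ) : SimpleGraph (Fin k ⊕ Fin (k + 1)) :=
  bipGraph fun (i : Fin k) (j : Fin (k + 1)) =>
    (i.1 < k - 3 ∧ ((j.1 : ℕ) = i.1 ∨ k - 3 ≤ j.1)) ∨
    (k - 3 ≤ i.1 ∧ ((j.1 : ℕ) = i.1 ∨ j.1 = k))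

/-- `𝒬_{2k+1}` (for `k ≥ 3`): bipartite adjacency matrix `[[Ĩ_{k−3}, J], [O, J₃ − I₃]]`. -/
def Qgraph (k : ℕ) : SimpleGraph (Fin k ⊕ Fin (k + 1)) :=
  bipGraph fun (i : Fin k) (j : Fin (k + 1)) =>
    (i.1 < k - 3 ∧ ((j.1 : ℕ) = i.1 ∨ k - 3 ≤ j.1)) ∨
    (k - 3 ≤ i.1 ∧ k - 2 ≤ j.1 ∧ j.1 - (k - 2) ≠ i.1 - (k - 3))

/-- `m · K₂`: the disjoint union of `m` copies of the complete graph `K₂`; the two vertices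
`(a, 0)` and `(a, 1)` of the `a`-th copy are adjacent. -/
def copiesK2 (m : ℕ) : SimpleGraph (Fin m × Fin 2) :=
  SimpleGraph.fromRel fun x y => x.1 = y.1

/-!
For a bipartite graph with `p × q` biadjacency matrix `N`, right-multiplying the characteristic
matrix of `[[0, N], [Nᵀ, 0]]` by `[[X, 0], [Nᵀ, 1]]` gives `X ^ p * χ(X) = X ^ q * χ_{N Nᵀ}(X²)`.
For `𝒮_{2k+1}` the biadjacency matrix is `[1 | I_k]`; for `ℛ` and `𝒬`, after splitting the
columns as `ℓ + 4`, it is `[[I, J], [O, T]]` with `T Tᵀ = I + J` and row sums `2`. In every case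
`N Nᵀ = I + u uᵀ` with `u ⬝ᵥ u = 4ℓ + 3`, and `χ_{I + u uᵀ} = (X - 1) ^ (n - 1) (X - 1 - u ⬝ᵥ u)`;
the `3ℓ` copies of `K₂` supply the missing factor `(X² - 1) ^ (3ℓ)`. Finally `𝒮_{2k+1}` is
connected while the two disjoint unions are not.
-/

open Matrix

namespace Matrix

variable {R : Type*} [CommRing R] {m n : Type*} [Fintype m] [Fintype n] [DecidableEq m]

theorem charpoly_one_add_vecMulVec {k : ℕ} (hm : Fintype.card m = k + 1) (u v : m → R) :
    (1 + vecMulVec u v).charpoly = (X - 1) ^ k * (X - 1 - C (u ⬝ᵥ v)) := by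
  rw [show 1 + vecMulVec u v = vecMulVec u v - scalar m (-1) by
      rw [map_neg, map_one, sub_neg_eq_add, add_comm],
    charpoly_sub_scalar, charpoly_vecMulVec, hm]
  simp [sub_comp, smul_eq_C_mul]
  ring

theorem charpoly_submatrix_mul_transpose_submatrix {m' n' : Type*} [Fintype m'] [Fintype n']
    [DecidableEq m'] (M : Matrix m n R) (e₁ : m' ≃ m) (e₂ : n' ≃ n) :
    (M.submatrix e₁ e₂ * (M.submatrix e₁ e₂)ᵀ).charpoly = (M * Mᵀ).charpoly := by
  rw [transpose_submatrix, submatrix_mul_equiv, ← charpoly_reindex e₁.symm]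
  rfl

variable [DecidableEq n]

theorem charpoly_fromBlocks_zero₁₁_zero₂₂ (N : Matrix m n R) (M : Matrix n m R) :
    X ^ Fintype.card m * (fromBlocks 0 N M 0).charpoly =
      X ^ Fintype.card n * expand R 2 (N * M).charpoly := by
  have hexpand : expand R 2 (N * M).charpoly = (scalar m (X ^ 2 : R[X]) - (N * M).map C).det := by
    rw [charpoly, ← AlgHom.coe_toRingHom, RingHom.map_det]
    congr 1
    ext i j : 1
    by_cases h : i = j <;> simp [h, -Matrix.map_mul]
  have hfactor : fromBlocks (scalar m X) (-N.map C) (-M.map C) (scalar n X) *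
      fromBlocks (scalar m X) 0 (M.map C) 1 =
      fromBlocks (scalar m (X ^ 2) - (N * M).map C) (-N.map C) 0 (scalar n (X : R[X])) := by
    simp [fromBlocks_multiply, ← smul_one_eq_diagonal, sq, sub_eq_add_neg, Matrix.map_mul,
      smul_smul]
  have hdet := congrArg det hfactor
  rw [det_mul, det_fromBlocks_zero₁₂, det_fromBlocks_zero₂₁] at hdet
  rw [charpoly, charmatrix_fromBlocks, hexpand]
  simpa [mul_comm] using hdet

theorem fromBlocks_one_ones_zero_mul_transpose {a b c : Type*} [Fintype a] [Fintype c]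
    [DecidableEq a] [DecidableEq b] (r : R) (T : Matrix b c R)
    (hc : (Fintype.card c : R) = r ^ 2) (hrow : ∀ i, ∑ j, T i j = r)
    (hT : T * Tᵀ = 1 + vecMulVec 1 1) :
    fromBlocks (1 : Matrix a a R) (of fun _ _ => 1 : Matrix a c R) 0 T *
        (fromBlocks (1 : Matrix a a R) (of fun _ _ => 1 : Matrix a c R) 0 T)ᵀ =
      1 + vecMulVec (Sum.elim (fun _ => r) 1) (Sum.elim (fun _ => r) 1) := by
  rw [fromBlocks_transpose, fromBlocks_multiply]
  simp only [Matrix.mul_one, transpose_zero, Matrix.mul_zero, zero_add, transpose_one, hT]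
  ext (i | i) (j | j) <;>
    simp [mul_apply, vecMulVec_apply, one_apply, hc, hrow, add_comm, sq]

end Matrix

section AdjacencyMatrices

variable {V W : Type*} [Fintype V] [Fintype W]

theorem adjMat_sum (G : SimpleGraph V) (H : SimpleGraph W) :
    adjMat (G ⊕g H) = fromBlocks (adjMat G) 0 0 (adjMat H) := by
  ext (v | v) (w | w) <;> simp [adjMat]

variable [DecidableEq V] [DecidableEq W]

theorem SimpleGraph.Iso.charpoly_adjMat_eq {G : SimpleGraph V} {H : SimpleGraph W} (e : G ≃g H) :
    (adjMat G).charpoly = (adjMat H).charpoly := by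
  have : adjMat H = reindex e.toEquiv e.toEquiv (adjMat G) := by
    ext v w
    exact if_congr e.symm.map_adj_iff.symm rfl rfl
  rw [this, charpoly_reindex]

theorem charpoly_adjMat_sum (G : SimpleGraph V) (H : SimpleGraph W) :
    (adjMat (G ⊕g H)).charpoly = (adjMat G).charpoly * (adjMat H).charpoly := by
  rw [adjMat_sum, charpoly_fromBlocks_zero₁₂]

end AdjacencyMatrices

noncomputable def biadjMat {α β : Type*} (P : α → β → Prop) : Matrix α β ℝ :=
  of fun i j => if P i j then 1 else 0

section Bipartite

variable {α β : Type*} [Fintype α] [Fintype β] [DecidableEq α] [DecidableEq β]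

theorem adjMat_bipGraph (P : α → β → Prop) :
    adjMat (bipGraph P) = fromBlocks 0 (biadjMat P) (biadjMat P)ᵀ 0 := by
  ext (i | i) (j | j) <;> simp [adjMat, biadjMat, bipGraph]

theorem charpoly_adjMat_bipGraph (P : α → β → Prop) :
    X ^ Fintype.card α * (adjMat (bipGraph P)).charpoly =
      X ^ Fintype.card β * expand ℝ 2 (biadjMat P * (biadjMat P)ᵀ).charpoly := by
  rw [adjMat_bipGraph, charpoly_fromBlocks_zero₁₁_zero₂₂]

theorem charpoly_adjMat_bipGraph_of_card_eq_succ (P : α → β → Prop)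
    (h : Fintype.card β = Fintype.card α + 1) :
    (adjMat (bipGraph P)).charpoly = X * expand ℝ 2 (biadjMat P * (biadjMat P)ᵀ).charpoly := by
  apply mul_left_cancel₀ (pow_ne_zero (Fintype.card α) X_ne_zero)
  rw [charpoly_adjMat_bipGraph, h, pow_succ, mul_assoc]

end Bipartite

def bipGraphEqIsoCopiesK2 (m : ℕ) : bipGraph (@Eq (Fin m)) ≃g copiesK2 m where
  toEquiv := (Equiv.boolProdEquivSum (Fin m)).symm.trans
    ((Equiv.prodComm _ _).trans (Equiv.prodCongr (Equiv.refl _) finTwoEquiv.symm))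
  map_rel_iff' := by
    rintro (a | a) (b | b) <;> simp [copiesK2, bipGraph, finTwoEquiv, eq_comm]

theorem charpoly_adjMat_copiesK2 (m : ℕ) :
    (adjMat (copiesK2 m)).charpoly = expand ℝ 2 ((X - 1) ^ m) := by
  apply mul_left_cancel₀ (pow_ne_zero m (X_ne_zero (R := ℝ)))
  have h := charpoly_adjMat_bipGraph (@Eq (Fin m))
  rw [(bipGraphEqIsoCopiesK2 m).charpoly_adjMat_eq] at h
  have hEq : biadjMat (@Eq (Fin m)) = 1 := by
    ext i j
    simp [biadjMat, one_apply]
  simpa [hEq, charpoly_one] using h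

theorem charpoly_adjMat_sum_copiesK2 {V : Type*} [Fintype V] [DecidableEq V] {G : SimpleGraph V}
    {f : ℝ[X]} (m : ℕ) (hG : (adjMat G).charpoly = X * expand ℝ 2 f) :
    (adjMat (G ⊕g copiesK2 m)).charpoly = X * expand ℝ 2 (f * (X - 1) ^ m) := by
  rw [charpoly_adjMat_sum, hG, charpoly_adjMat_copiesK2, map_mul, mul_assoc]

def bipGraphIsoStarSubdiv (k : ℕ) :
    bipGraph (fun (i : Fin k) (j : Unit ⊕ Fin k) => j = .inl () ∨ j = .inr i) ≃g starSubdiv k where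
  toEquiv := (Equiv.sumAssoc _ _ _).symm.trans
    ((Equiv.sumCongr (Equiv.sumComm _ _) (Equiv.refl _)).trans (Equiv.sumAssoc _ _ _))
  map_rel_iff' := by
    rintro (a | ⟨⟩ | a) (b | ⟨⟩ | b) <;> simp [starSubdiv, bipGraph, eq_comm]

theorem charpoly_adjMat_starSubdiv (k : ℕ) :
    (adjMat (starSubdiv (k + 1))).charpoly =
      X * expand ℝ 2 ((X - 1) ^ k * (X - 1 - C (k + 1 : ℝ))) := by
  rw [← (bipGraphIsoStarSubdiv (k + 1)).charpoly_adjMat_eq,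
    charpoly_adjMat_bipGraph_of_card_eq_succ _ (by simp [add_comm])]
  set P : Fin (k + 1) → Unit ⊕ Fin (k + 1) → Prop := fun i j => j = .inl () ∨ j = .inr i
  have hN : biadjMat P * (biadjMat P)ᵀ = 1 + vecMulVec 1 1 := by
    ext i j
    simp [P, biadjMat, mul_apply, Fintype.sum_sum_type, one_apply, add_comm, eq_comm]
  rw [hN, charpoly_one_add_vecMulVec (k := k) (by simp)]
  simp

theorem charpoly_adjMat_bipGraph_of_submatrix_eq_fromBlocks (l : ℕ)
    (P : Fin (l + 3) → Fin (l + 4) → Prop) (T : Matrix (Fin 3) (Fin 4) ℝ)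
    (hrow : ∀ i, ∑ j, T i j = 2) (hT : T * Tᵀ = 1 + vecMulVec 1 1)
    (hP : (biadjMat P).submatrix finSumFinEquiv finSumFinEquiv =
      fromBlocks 1 (of fun _ _ => 1) 0 T) :
    (adjMat (bipGraph P)).charpoly =
      X * expand ℝ 2 ((X - 1) ^ (l + 2) * (X - 1 - C (4 * l + 3 : ℝ))) := by
  have hdot : (Sum.elim (fun _ => 2) 1 : Fin l ⊕ Fin 3 → ℝ) ⬝ᵥ Sum.elim (fun _ => 2) 1 =
      4 * l + 3 := by
    simp [dotProduct, Fintype.sum_sum_type]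
    ring
  rw [charpoly_adjMat_bipGraph_of_card_eq_succ _ (by simp),
    ← charpoly_submatrix_mul_transpose_submatrix _ finSumFinEquiv finSumFinEquiv, hP,
    fromBlocks_one_ones_zero_mul_transpose 2 T (by norm_num) hrow hT,
    charpoly_one_add_vecMulVec (k := l + 2) (by simp), hdot]

/-- `Ĩ₃`, the lower right block of the biadjacency matrix of `ℛ`. -/
def rCorner : Matrix (Fin 3) (Fin 4) ℝ := !![1, 0, 0, 1; 0, 1, 0, 1; 0, 0, 1, 1]

/-- `[0 | J₃ − I₃]`: the biadjacency matrix `[[Ĩ_ℓ, J], [O, J₃ − I₃]]` of `𝒬` is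
`[[I_ℓ, J], [O, qCorner]]` once its columns are split as `ℓ + 4` rather than `(ℓ + 1) + 3`. -/
def qCorner : Matrix (Fin 3) (Fin 4) ℝ := !![0, 0, 1, 1; 0, 1, 0, 1; 0, 1, 1, 0]

theorem rCorner_mul_transpose : rCorner * rCornerᵀ = 1 + vecMulVec 1 1 := by
  ext i j
  fin_cases i <;> fin_cases j <;> simp [rCorner, mul_apply, Fin.sum_univ_four, one_apply]

theorem qCorner_mul_transpose : qCorner * qCornerᵀ = 1 + vecMulVec 1 1 := by
  ext i j
  fin_cases i <;> fin_cases j <;> simp [qCorner, mul_apply, Fin.sum_univ_four, one_apply]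

theorem sum_rCorner_row (i : Fin 3) : ∑ j, rCorner i j = 2 := by
  fin_cases i <;> simp [rCorner, Fin.sum_univ_four] <;> norm_num

theorem sum_qCorner_row (i : Fin 3) : ∑ j, qCorner i j = 2 := by
  fin_cases i <;> simp [qCorner, Fin.sum_univ_four] <;> norm_num

theorem charpoly_adjMat_Rgraph (l : ℕ) :
    (adjMat (Rgraph (l + 3))).charpoly =
      X * expand ℝ 2 ((X - 1) ^ (l + 2) * (X - 1 - C (4 * l + 3 : ℝ))) := by
  refine charpoly_adjMat_bipGraph_of_submatrix_eq_fromBlocks l _ rCorner sum_rCorner_row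
    rCorner_mul_transpose ?_
  ext (i | i) (j | j)
  · simp only [biadjMat, submatrix_apply, of_apply, finSumFinEquiv_apply_left, Fin.val_castAdd,
      fromBlocks_apply₁₁, one_apply, Fin.ext_iff]
    split_ifs <;> first | rfl | omega
  · simp [biadjMat]
  · simp [biadjMat]
    omega
  · fin_cases i <;> fin_cases j <;> simp [biadjMat, rCorner]

theorem charpoly_adjMat_Qgraph (l : ℕ) :
    (adjMat (Qgraph (l + 3))).charpoly =
      X * expand ℝ 2 ((X - 1) ^ (l + 2) * (X - 1 - C (4 * l + 3 : ℝ))) := by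
  refine charpoly_adjMat_bipGraph_of_submatrix_eq_fromBlocks l _ qCorner sum_qCorner_row
    qCorner_mul_transpose ?_
  ext (i | i) (j | j)
  · simp only [biadjMat, submatrix_apply, of_apply, finSumFinEquiv_apply_left, Fin.val_castAdd,
      fromBlocks_apply₁₁, one_apply, Fin.ext_iff]
    split_ifs <;> first | rfl | omega
  · simp [biadjMat]
  · simp [biadjMat]
  · fin_cases i <;> fin_cases j <;> simp [biadjMat, qCorner]

theorem starSubdiv_connected (k : ℕ) : (starSubdiv k).Connected := by
  refine SimpleGraph.connected_iff_exists_forall_reachable _ |>.mpr ⟨.inl (), ?_⟩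
  have hcenter (i : Fin k) : (starSubdiv k).Adj (.inl ()) (.inr (.inl i)) := by
    simp [starSubdiv]
  have hleg (i : Fin k) : (starSubdiv k).Adj (.inr (.inl i)) (.inr (.inr i)) := by
    simp [starSubdiv]
  rintro (⟨⟩ | i | i)
  · rfl
  · exact (hcenter i).reachable
  · exact (hcenter i).reachable.trans (hleg i).reachable

theorem not_nonempty_sum_iso_starSubdiv {V W : Type*} [Nonempty V] [Nonempty W]
    (G : SimpleGraph V) (H : SimpleGraph W) (k : ℕ) : ¬ Nonempty (G ⊕g H ≃g starSubdiv k) :=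
  fun ⟨e⟩ => SimpleGraph.not_connected_sum (e.connected_iff.mpr (starSubdiv_connected k))

/-- Part of Corollary 12: for every `ℓ ≥ 1`, the graphs `𝒮_{8ℓ+7}` (i.e. `𝒮_{2k+1}` with
`k = 4ℓ+3`), `ℛ_{2ℓ+7} ∪ 3ℓ·K₂` and `𝒬_{2ℓ+7} ∪ 3ℓ·K₂` are pairwise cospectral, and
neither of the two disjoint unions is isomorphic to `𝒮_{8ℓ+7}`. -/
theorem starSubdiv_cospectral_mates (l : ℕ) (hl : 1 ≤ l) :
    (adjMat (Rgraph (l + 3) ⊕g copiesK2 (3 * l))).charpoly =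
        (adjMat (starSubdiv (4 * l + 3))).charpoly ∧
    (adjMat (Qgraph (l + 3) ⊕g copiesK2 (3 * l))).charpoly =
        (adjMat (starSubdiv (4 * l + 3))).charpoly ∧
    (adjMat (Rgraph (l + 3) ⊕g copiesK2 (3 * l))).charpoly =
        (adjMat (Qgraph (l + 3) ⊕g copiesK2 (3 * l))).charpoly ∧
    ¬ Nonempty ((Rgraph (l + 3) ⊕g copiesK2 (3 * l)) ≃g starSubdiv (4 * l + 3)) ∧
    ¬ Nonempty ((Qgraph (l + 3) ⊕g copiesK2 (3 * l)) ≃g starSubdiv (4 * l + 3)) := by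
  have hR := charpoly_adjMat_sum_copiesK2 (3 * l) (charpoly_adjMat_Rgraph l)
  have hQ := charpoly_adjMat_sum_copiesK2 (3 * l) (charpoly_adjMat_Qgraph l)
  have hS : (adjMat (starSubdiv (4 * l + 3))).charpoly =
      X * expand ℝ 2 ((X - 1) ^ (l + 2) * (X - 1 - C (4 * l + 3 : ℝ)) * (X - 1) ^ (3 * l)) := by
    have hcast : ((4 * l + 2 : ℕ) : ℝ) + 1 = 4 * l + 3 := by push_cast; ring
    rw [charpoly_adjMat_starSubdiv (4 * l + 2), hcast]
    congr 2
    ring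
  have : NeZero (3 * l) := ⟨by omega⟩
  exact ⟨hR.trans hS.symm, hQ.trans hS.symm, hR.trans hQ.symm,
    not_nonempty_sum_iso_starSubdiv _ _ _, not_nonempty_sum_iso_starSubdiv _ _ _⟩
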